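/- Let f : ℝ^d → ℝ be differentiable, let 0 < γ ≤ 4α, λ ≥ 0, ε > 0, t > 0, and let x, m, v ∈ ℝ^d with v > 0 entrywise. Set g := ∇f(x), α_t := (1 − e^{−αt})^{−1}, γ_t := (1 − e^{−γt})^{−1}, h := √(γ_t v) + ε·1 (entrywise), and s := 𝕀(m ⊙ x ≥ 0). Then the quantity E := ⟨αg + λ s ⊙ m, −α_t m/h − λ s ⊙ x⟩ + ⟨α_t m/h + λ s ⊙ x, α(g − m)⟩ − ⟨α_t γ √(γ_t) · m² / (4√v ⊙ h²), g² − v⟩ − ⟨ (m²/2) ⊙ (2α e^{−αt} h − α_t^{−1} γ e^{−γt} γ_t √(γ_t v)) / (2(α_t^{−1} h)²), 1⟩ satisfies E ≤ ⟨(γ/4 − α − α/(2(e^{αt}−1)) + γ/(4(e^{γt}−1)))·1 − λ s, α_t m²/h⟩ ≤ 0. Consequently H_t(x, m, v) = α f(x) + ‖α_t m²/(2h)‖₁ + λ‖(m ⊙ x)^+‖₁ is a Lyapunov function for the continuous-time Adam dynamics with cautious weight decay: ẋ = −α_t m/h − λ𝕀(m ⊙ x ≥ 0) ⊙ x, ṁ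 = α(∇f(x) − m), v̇ = γ(∇f(x)² − v). -/

import Mathlib

lemma F_mono (a u : ℝ) (ha : 0 < a) (hu : 0 < u) (hau : u ≤ 4 * a) :
    u / (1 - Real.exp (-u)) ≤ (4 * a) / (1 - Real.exp (-(4 * a))) := by
  have h1 : 0 < 1 - Real.exp (-u) := by
    have : Real.exp (-u) < 1 := Real.exp_lt_one_iff.mpr (by linarith)
    linarith
  have h2 : 0 < 1 - Real.exp (-(4 * a)) := by
    have : Real.exp (-(4 * a)) < 1 := Real.exp_lt_one_iff.mpr (by linarith)
    linarith
  rw [div_le_div_iff₀ h1 h2]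
  have hr : 0 ≤ 4 * a - u := by linarith
  have hr' : 1 - (4 * a - u) ≤ Real.exp (-(4 * a - u)) := by
    have := Real.add_one_le_exp (-(4 * a - u)); linarith
  have hEu : (1 + u) * Real.exp (-u) ≤ 1 := by
    have h3 := Real.add_one_le_exp u
    have h4 : Real.exp u * Real.exp (-u) = 1 := by rw [← Real.exp_add]; simp
    nlinarith [Real.exp_pos (-u)]
  have hsplit : Real.exp (-(4 * a)) = Real.exp (-u) * Real.exp (-(4 * a - u)) := by
    rw [← Real.exp_add]; ring_nf
  have i1 : u * (1 - Real.exp (-(4 * a - u))) ≤ u * (4 * a - u) := by nlinarith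
  have i2 : Real.exp (-u) * (u * (4 * a - u) + (4 * a - u)) ≤ 4 * a - u := by
    nlinarith [Real.exp_pos (-u)]
  have i3 : Real.exp (-u) * (u * (1 - Real.exp (-(4 * a - u)))) ≤
      Real.exp (-u) * (u * (4 * a - u)) :=
    mul_le_mul_of_nonneg_left i1 (Real.exp_pos (-u)).le
  rw [hsplit]
  nlinarith [i2, i3]

lemma F_bound2 (a : ℝ) (ha : 0 < a) :
    (4 * a) / (1 - Real.exp (-(4 * a))) ≤ 2 * a / (1 - Real.exp (-a)) + 2 * a := by
  set q := Real.exp (-a) with hq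
  have hq0 : 0 < q := Real.exp_pos _
  have hq1 : q < 1 := Real.exp_lt_one_iff.mpr (by linarith)
  have hq4 : Real.exp (-(4 * a)) = q ^ 4 := by
    rw [show -(4 * a) = (4 : ℕ) * (-a) by push_cast; ring, Real.exp_nat_mul]
  rw [hq4]
  have h1 : 0 < 1 - q := by linarith
  have h4 : 0 < 1 - q ^ 4 := by
    have := pow_lt_one₀ hq0.le hq1 (by norm_num : 4 ≠ 0)
    linarith
  have hrhs : 2 * a / (1 - q) + 2 * a = 2 * a * (2 - q) / (1 - q) := by
    field_simp; ring
  have hcube : (0:ℝ) ≤ 1 + q + q ^ 2 - q ^ 3 := by nlinarith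
  rw [hrhs, div_le_div_iff₀ h4 h1]
  nlinarith [mul_nonneg (mul_nonneg (mul_nonneg ha.le hq0.le) h1.le) hcube]
lemma C_nonpos (α γ t : ℝ) (hγ : 0 < γ) (hγα : γ ≤ 4 * α) (ht : 0 < t) :
    γ / 4 - α - α / (2 * (Real.exp (α * t) - 1))
      + γ / (4 * (Real.exp (γ * t) - 1)) ≤ 0 := by
  have hα : 0 < α := by linarith
  have ha : 0 < α * t := by positivity
  have hu : 0 < γ * t := by positivity
  have key := (F_mono (α * t) (γ * t) ha hu (by nlinarith)).trans (F_bound2 (α * t) ha)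
  set A := Real.exp (α * t) with hA
  set B := Real.exp (γ * t) with hB
  have hA1 : 1 < A := by rw [hA]; have := Real.add_one_le_exp (α * t); linarith
  have hB1 : 1 < B := by rw [hB]; have := Real.add_one_le_exp (γ * t); linarith
  have hiA : Real.exp (-(α * t)) = A⁻¹ := by rw [Real.exp_neg]
  have hiB : Real.exp (-(γ * t)) = B⁻¹ := by rw [Real.exp_neg]
  rw [hiA, hiB] at key
  have hA0 : (0:ℝ) < A := by linarith
  have hB0 : (0:ℝ) < B := by linarith
  have hA1' : A - 1 ≠ 0 := by linarith
  have hB1' : B - 1 ≠ 0 := by linarith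
  have e1 : γ * t / (1 - B⁻¹) = γ * t + γ * t / (B - 1) := by
    field_simp
    ring
  have e2 : 2 * (α * t) / (1 - A⁻¹) = 2 * (α * t) + 2 * (α * t) / (A - 1) := by
    field_simp
    ring
  rw [e1, e2] at key
  have h4 : (0:ℝ) < 4 * t := by linarith
  have h5 : 4 * t * (γ / 4 - α - α / (2 * (A - 1)) + γ / (4 * (B - 1)))
      = (γ * t + γ * t / (B - 1)) - ((2 * (α * t) + 2 * (α * t) / (A - 1)) + 2 * (α * t)) := by
    field_simp
    ring
  nlinarith [key, h5]

lemma coord_bound (α γ lam αt γt ε Ea Eu qa qu M G V H S X : ℝ)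
    (hα : 0 < α) (hγ : 0 < γ) (hlam : 0 ≤ lam) (hαtp : 0 < αt) (hγtp : 0 < γt)
    (hV : 0 < V) (hε : 0 < ε) (hH : H = Real.sqrt (γt * V) + ε)
    (hS : S = 0 ∨ S = 1) (hSX : 0 ≤ S * (M * X))
    (hEa : 1 < Ea) (hEu : 1 < Eu)
    (hqa : αt * qa * (Ea - 1) = 1) (hqu : γt * qu * (Eu - 1) = 1) :
    (α * G + lam * S * M) * (-(αt * M / H) - lam * S * X)
      + (αt * M / H + lam * S * X) * (α * (G - M))
      - (αt * γ * Real.sqrt γt * M ^ 2 / (4 * Real.sqrt V * H ^ 2)) * (G ^ 2 - V)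
      - (M ^ 2 / 2) * ((2 * α * qa * H - αt⁻¹ * γ * qu * γt * Real.sqrt (γt * V))
          / (2 * (αt⁻¹ * H) ^ 2))
    ≤ ((γ / 4 - α - α / (2 * (Ea - 1)) + γ / (4 * (Eu - 1))) - lam * S)
        * (αt * M ^ 2 / H) := by
  set R := Real.sqrt (γt * V) with hRdef
  have hR : 0 < R := Real.sqrt_pos.mpr (by positivity)
  have hH0 : 0 < H := by rw [hH]; linarith
  have hRH : R ≤ H := by rw [hH]; linarith
  have hsV : 0 < Real.sqrt V := Real.sqrt_pos.mpr hV
  have hsγ : 0 ≤ Real.sqrt γt := Real.sqrt_nonneg _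
  have hmul : Real.sqrt γt * Real.sqrt V = R := (Real.sqrt_mul hγtp.le V).symm
  have hVs : Real.sqrt V * Real.sqrt V = V := Real.mul_self_sqrt hV.le
  have hS0 : 0 ≤ S := by rcases hS with h | h <;> simp [h]
  have hP : 0 ≤ αt * M ^ 2 / H := by positivity
  have hEa1 : (0:ℝ) < Ea - 1 := by linarith
  have hEu1 : (0:ℝ) < Eu - 1 := by linarith
  -- Claim 1
  have c1 : (α * G + lam * S * M) * (-(αt * M / H) - lam * S * X)
        + (αt * M / H + lam * S * X) * (α * (G - M))
      = -((α + lam * S) * (αt * M ^ 2 / H)) - lam * (α + lam * S) * (S * (M * X)) := by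
    ring
  have c1b : 0 ≤ lam * (α + lam * S) * (S * (M * X)) := by
    apply mul_nonneg (mul_nonneg hlam (by nlinarith)) hSX
  -- Claim 2
  have hK : 0 ≤ αt * γ * Real.sqrt γt * M ^ 2 / (4 * Real.sqrt V * H ^ 2) := by positivity
  have c2a : -((αt * γ * Real.sqrt γt * M ^ 2 / (4 * Real.sqrt V * H ^ 2)) * (G ^ 2 - V))
      ≤ (αt * γ * Real.sqrt γt * M ^ 2 / (4 * Real.sqrt V * H ^ 2)) * V := by
    nlinarith [mul_nonneg hK (sq_nonneg G)]
  have c2b : (αt * γ * Real.sqrt γt * M ^ 2 / (4 * Real.sqrt V * H ^ 2)) * V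
      = γ * αt * M ^ 2 * R / (4 * H ^ 2) := by
    rw [← hmul]
    field_simp
    linear_combination (-(M ^ 2)) * hVs
  have c2c : γ * αt * M ^ 2 * R / (4 * H ^ 2) ≤ γ / 4 * (αt * M ^ 2 / H) := by
    have : γ * αt * M ^ 2 * R / (4 * H ^ 2) ≤ γ * αt * M ^ 2 * H / (4 * H ^ 2) := by
      gcongr
    have e : γ * αt * M ^ 2 * H / (4 * H ^ 2) = γ / 4 * (αt * M ^ 2 / H) := by
      field_simp
    linarith
  -- Claim 3
  have ha1 : αt * qa = (Ea - 1)⁻¹ := by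
    field_simp
    linarith [hqa]
  have hu1 : γt * qu = (Eu - 1)⁻¹ := by
    field_simp
    linarith [hqu]
  have c3a : (M ^ 2 / 2) * ((2 * α * qa * H - αt⁻¹ * γ * qu * γt * R)
        / (2 * (αt⁻¹ * H) ^ 2))
      = α * (αt * qa) / 2 * (αt * M ^ 2 / H)
        - γ * (γt * qu) / 4 * (αt * M ^ 2 / H) * (R / H) := by
    field_simp
    ring
  have c3b : γ * (Eu - 1)⁻¹ / 4 * (αt * M ^ 2 / H) * (R / H)
      ≤ γ * (Eu - 1)⁻¹ / 4 * (αt * M ^ 2 / H) * 1 := by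
    have hX : 0 ≤ γ * (Eu - 1)⁻¹ / 4 * (αt * M ^ 2 / H) := by positivity
    exact mul_le_mul_of_nonneg_left ((div_le_one hH0).mpr hRH) hX
  rw [ha1, hu1] at c3a
  -- combine
  have final : ((γ / 4 - α - α / (2 * (Ea - 1)) + γ / (4 * (Eu - 1))) - lam * S)
        * (αt * M ^ 2 / H)
      = -((α + lam * S) * (αt * M ^ 2 / H)) + γ / 4 * (αt * M ^ 2 / H)
        - α * (Ea - 1)⁻¹ / 2 * (αt * M ^ 2 / H)
        + γ * (Eu - 1)⁻¹ / 4 * (αt * M ^ 2 / H) * 1 := by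
    rw [div_eq_mul_inv α (2 * (Ea - 1)), mul_inv, div_eq_mul_inv γ (4 * (Eu - 1)), mul_inv]
    ring
  linarith [c1b, c2a, c2b.le, c2c]


/-- the Lyapunov derivative estimate for continuous-time Adam with
cautious weight decay. With `g = ∇f(x)`, `α_t = (1 - e^{-αt})⁻¹`, `γ_t = (1 - e^{-γt})⁻¹`,
`h = √(γ_t v) + ε·1` and `s = 𝕀(m ⊙ x ≥ 0)`, the quantity `E` (the time derivative of
`H_t(x,m,v) = α f(x) + ‖α_t m²/(2h)‖₁ + λ‖(m ⊙ x)⁺‖₁` along the dynamics) satisfies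
`E ≤ ⟨(γ/4 - α - α/(2(e^{αt}-1)) + γ/(4(e^{γt}-1)))·1 - λ s, α_t m²/h⟩ ≤ 0`. -/
theorem adam_cwd_lyapunov_derivative {d : ℕ} (f : (Fin d → ℝ) → ℝ)
    (grad : (Fin d → ℝ) → Fin d → ℝ)
    (hgrad : ∀ p, HasFDerivAt f
      (∑ i, grad p i • (ContinuousLinearMap.proj i : (Fin d → ℝ) →L[ℝ] ℝ)) p)
    (α γ lam ε t : ℝ) (hγ : 0 < γ) (hγα : γ ≤ 4 * α) (hlam : 0 ≤ lam) (hε : 0 < ε)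
    (ht : 0 < t) (x m v : Fin d → ℝ) (hv : ∀ i, 0 < v i)
    (g : Fin d → ℝ) (hg : g = grad x)
    (αt γt : ℝ) (hαt : αt = (1 - Real.exp (-(α * t)))⁻¹)
    (hγt : γt = (1 - Real.exp (-(γ * t)))⁻¹)
    (h : Fin d → ℝ) (hh : ∀ i, h i = Real.sqrt (γt * v i) + ε)
    (s : Fin d → ℝ) (hs : ∀ i, s i = if 0 ≤ m i * x i then (1 : ℝ) else 0)
    (E : ℝ)
    (hE : E = (∑ i, (α * g i + lam * s i * m i) * (-(αt * m i / h i) - lam * s i * x i))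
        + (∑ i, (αt * m i / h i + lam * s i * x i) * (α * (g i - m i)))
        - (∑ i, (αt * γ * Real.sqrt γt * (m i) ^ 2 / (4 * Real.sqrt (v i) * (h i) ^ 2))
            * ((g i) ^ 2 - v i))
        - (∑ i, ((m i) ^ 2 / 2)
            * ((2 * α * Real.exp (-(α * t)) * h i
                - αt⁻¹ * γ * Real.exp (-(γ * t)) * γt * Real.sqrt (γt * v i))
              / (2 * (αt⁻¹ * h i) ^ 2)))) :
    E ≤ (∑ i, ((γ / 4 - α - α / (2 * (Real.exp (α * t) - 1))
            + γ / (4 * (Real.exp (γ * t) - 1))) - lam * s i) * (αt * (m i) ^ 2 / h i)) ∧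
      (∑ i, ((γ / 4 - α - α / (2 * (Real.exp (α * t) - 1))
            + γ / (4 * (Real.exp (γ * t) - 1))) - lam * s i) * (αt * (m i) ^ 2 / h i)) ≤ 0 := by

  have hα : 0 < α := by linarith
  have hEa : 1 < Real.exp (α * t) := by
    have := Real.add_one_le_exp (α * t); nlinarith
  have hEu : 1 < Real.exp (γ * t) := by
    have := Real.add_one_le_exp (γ * t); nlinarith
  have hqa1 : Real.exp (-(α * t)) < 1 := Real.exp_lt_one_iff.mpr (by nlinarith)
  have hqu1 : Real.exp (-(γ * t)) < 1 := Real.exp_lt_one_iff.mpr (by nlinarith)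
  have hαtp : 0 < αt := by rw [hαt]; exact inv_pos.mpr (by linarith)
  have hγtp : 0 < γt := by rw [hγt]; exact inv_pos.mpr (by linarith)
  have hma : Real.exp (-(α * t)) * Real.exp (α * t) = 1 := by
    rw [← Real.exp_add]; simp
  have hmu : Real.exp (-(γ * t)) * Real.exp (γ * t) = 1 := by
    rw [← Real.exp_add]; simp
  have hqa : αt * Real.exp (-(α * t)) * (Real.exp (α * t) - 1) = 1 := by
    rw [hαt]
    have h1 : 1 - Real.exp (-(α * t)) ≠ 0 := by linarith
    field_simp
    nlinarith [hma]
  have hqu : γt * Real.exp (-(γ * t)) * (Real.exp (γ * t) - 1) = 1 := by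
    rw [hγt]
    have h1 : 1 - Real.exp (-(γ * t)) ≠ 0 := by linarith
    field_simp
    nlinarith [hmu]
  have hC := C_nonpos α γ t hγ hγα ht
  have hSi : ∀ i, s i = 0 ∨ s i = 1 := by
    intro i; rw [hs]; split_ifs <;> simp
  have hSXi : ∀ i, 0 ≤ s i * (m i * x i) := by
    intro i; rw [hs]; split_ifs with h' <;> simp [h']
  constructor
  · rw [hE, ← Finset.sum_add_distrib, ← Finset.sum_sub_distrib, ← Finset.sum_sub_distrib]
    apply Finset.sum_le_sum
    intro i _
    exact coord_bound α γ lam αt γt ε (Real.exp (α * t)) (Real.exp (γ * t))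
      (Real.exp (-(α * t))) (Real.exp (-(γ * t))) (m i) (g i) (v i) (h i) (s i) (x i)
      hα hγ hlam hαtp hγtp (hv i) hε (hh i) (hSi i) (hSXi i) hEa hEu hqa hqu
  · apply Finset.sum_nonpos
    intro i _
    have hhi : 0 < h i := by
      rw [hh i]
      have := Real.sqrt_nonneg (γt * v i)
      linarith
    have hP : 0 ≤ αt * (m i) ^ 2 / h i := by positivity
    have hSnn : 0 ≤ lam * s i := by
      rcases hSi i with h' | h' <;> simp [h', hlam]
    exact mul_nonpos_of_nonpos_of_nonneg (by linarith) hP
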